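/- arXiv:2507.01869 — 4 statements merged into one kernel-verified Lean document; each statement's English description precedes it below -/
import Mathlib

section
/- Let H be a Heyting algebra. Then H satisfies De Morgan's law (¬a ⊔ ¬¬a = ⊤ for all a) if and only if for every x ∈ H, the interval Heyting algebra H_{≤x} satisfies De Morgan's law, i.e. (¬a ⊓ x) ⊔ (¬¬a ⊓ x) = x for all a ≤ x. -/
/-- A Heyting algebra `H` satisfies De Morgan's law (`¬a ⊔ ¬¬a = ⊤` for all `a`)
iff every interval Heyting algebra `H_{≤x}` does, i.e.
`(¬a ⊓ x) ⊔ (¬¬a ⊓ x) = x` for all `a ≤ x`. -/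
theorem stmt_8 {H : Type*} [HeytingAlgebra H] :
    (∀ a : H, aᶜ ⊔ aᶜᶜ = ⊤) ↔
      ∀ x a : H, a ≤ x → (aᶜ ⊓ x) ⊔ (aᶜᶜ ⊓ x) = x := by
  constructor
  · intro h x a _
    rw [← inf_sup_right, h a, top_inf_eq]
  · intro h a
    simpa using h ⊤ a le_top
end

section
/- Let L be a frame (complete Heyting algebra) and let l ≤ l' in L. Then the map (L_{≤l})_{¬¬} → (L_{≤l'})_{¬¬} sending x to ¬¬x ⊓ l' is left adjoint to the map (L_{≤l'})_{¬¬} → (L_{≤l})_{¬¬}, x ↦ x ⊓ l, and this left adjoint is injective. -/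
/-- For `l ≤ l'` in a frame `L`, the map `x ↦ ¬¬x ⊓ l'` from the `¬¬`-closed
elements of `L_{≤l}` to those of `L_{≤l'}` is left adjoint to the restriction
map `y ↦ y ⊓ l`, and it is injective. -/
theorem stmt_9 {L : Type*} [Order.Frame L] (l l' : L) (hll' : l ≤ l') :
    (∀ x y : L, x ≤ l → xᶜᶜ ⊓ l = x → y ≤ l' → yᶜᶜ ⊓ l' = y →
        (xᶜᶜ ⊓ l' ≤ y ↔ x ≤ y ⊓ l)) ∧
      (∀ x x' : L, x ≤ l → xᶜᶜ ⊓ l = x → x' ≤ l → x'ᶜᶜ ⊓ l = x' →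
        xᶜᶜ ⊓ l' = x'ᶜᶜ ⊓ l' → x = x') := by
  constructor
  · intro x y hx hxc hy hyc
    constructor
    · intro h
      have hxx : x ≤ xᶜᶜ ⊓ l' := le_inf ((hxc.symm.le).trans inf_le_left) (hx.trans hll')
      exact le_inf (hxx.trans h) hx
    · intro h
      have h1 : x ≤ y := h.trans inf_le_left
      have h2 : xᶜᶜ ≤ yᶜᶜ := compl_le_compl (compl_le_compl h1)
      calc xᶜᶜ ⊓ l' ≤ yᶜᶜ ⊓ l' := inf_le_inf_right _ h2
        _ = y := hyc
  · intro x x' hx hxc hx' hxc' h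
    have h2 := congrArg (· ⊓ l) h
    simp only [inf_assoc, inf_of_le_right hll'] at h2
    rw [hxc, hxc'] at h2
    exact h2
end

section
/- In a compact regular frame, an element is compact if and only if it is complemented. -/
/-- The December 2024 Mathlib definition of a compact element of a complete lattice
(Mathlib's `IsCompactElement` is now stated with directed sets). -/
def CompleteLattice.IsCompactElement {α : Type*} [CompleteLattice α] (k : α) :=
  ∀ s : Set α, k ≤ sSup s → ∃ t : Finset α, ↑t ⊆ s ∧ k ≤ t.sup id

universe u

theorem CompleteLattice.isCompactElement_iff {α : Type u} [CompleteLattice α] (k : α) :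
    CompleteLattice.IsCompactElement k ↔
      ∀ (ι : Type u) (s : ι → α), k ≤ iSup s → ∃ t : Finset ι, k ≤ t.sup s := by
  classical
  constructor
  · intro H ι s hs
    obtain ⟨t, ht, ht'⟩ := H (Set.range s) (by rwa [sSup_range])
    have : ∀ x : t, ∃ i, s i = x := fun x => ht x.prop
    choose f hf using this
    refine ⟨Finset.univ.image f, ht'.trans ?_⟩
    rw [Finset.sup_le_iff]
    intro b hb
    rw [← show s (f ⟨b, hb⟩) = id b from hf _]
    exact Finset.le_sup (Finset.mem_image_of_mem f <| Finset.mem_univ (Subtype.mk b hb))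
  · intro H s hs
    obtain ⟨t, ht⟩ := H s Subtype.val (by rwa [← sSup_eq_iSup'])
    refine ⟨t.map (Function.Embedding.subtype _), ?_, ht.trans ?_⟩
    · intro x hx
      simp only [Finset.coe_map, Set.mem_image, Finset.mem_coe] at hx
      obtain ⟨y, -, rfl⟩ := hx
      exact y.2
    · rw [Finset.sup_map]
      exact le_rfl

/-- In a compact regular frame, an element is compact iff it is complemented. -/
theorem stmt_10 {L : Type*} [Order.Frame L]
    (hcomp : CompleteLattice.IsCompactElement (⊤ : L))
    (hreg : ∀ l : L, l = sSup {a : L | ∃ t : L, t ⊓ a = ⊥ ∧ t ⊔ l = ⊤})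
    (x : L) :
    CompleteLattice.IsCompactElement x ↔ ∃ t : L, x ⊓ t = ⊥ ∧ x ⊔ t = ⊤ := by
  classical
  constructor
  · intro hx
    have hle : x ≤ sSup {a : L | ∃ t : L, t ⊓ a = ⊥ ∧ t ⊔ x = ⊤} := le_of_eq (hreg x)
    obtain ⟨F, hFsub, hFle⟩ := hx _ hle
    choose g hg1 hg2 using fun a (ha : a ∈ F) => hFsub ha
    set t : L := F.attach.inf (fun a => g a.1 a.2) with ht
    refine ⟨t, ?_, ?_⟩
    · have h1 : x ⊓ t ≤ F.sup id ⊓ t := inf_le_inf_right t hFle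
      have h2 : F.sup id ⊓ t ≤ ⊥ := by
        rw [Finset.sup_inf_distrib_right]
        apply Finset.sup_le
        intro a ha
        calc (id a) ⊓ t ≤ g a ha ⊓ a := by
              refine le_inf ?_ inf_le_left
              exact le_trans inf_le_right
                (le_trans (Finset.inf_le (Finset.mem_attach _ ⟨a, ha⟩)) le_rfl)
          _ = ⊥ := hg1 a ha
      exact le_bot_iff.mp (h1.trans h2)
    · rw [ht, Finset.inf_sup_distrib_left]
      apply le_antisymm le_top
      apply Finset.le_inf
      intro a _
      rw [sup_comm, hg2 a.1 a.2]
  · rintro ⟨t, hxt, hxt'⟩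
    rw [CompleteLattice.isCompactElement_iff] at hcomp ⊢
    intro ι s hs
    have htop : (⊤ : L) ≤ ⨆ o : Option ι, Option.elim o t s := by
      rw [← hxt']
      apply sup_le
      · exact hs.trans (iSup_le fun i => le_iSup (fun o : Option ι => Option.elim o t s) (some i))
      · exact le_iSup (fun o : Option ι => Option.elim o t s) none
    obtain ⟨F, hF⟩ := hcomp (Option ι) _ htop
    refine ⟨F.eraseNone, ?_⟩
    have : x = x ⊓ F.sup (fun o => Option.elim o t s) :=
      (inf_eq_left.mpr (le_top.trans hF)).symm
    rw [this, Finset.sup_inf_distrib_left]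
    apply Finset.sup_le
    rintro (_ | i) ho
    · exact (le_of_eq hxt).trans bot_le
    · exact inf_le_right.trans (Finset.le_sup (Finset.mem_eraseNone.mpr ho))
end

section
/- A presheaf topos Psh(C) on a small category C is De Morgan (every subobject lattice is a Stone algebra) if and only if C satisfies the right Ore condition, i.e. every cospan f : a → c, g : b → c in C can be completed to a commutative square by morphisms d → a, d → b. -/
open CategoryTheory GrothendieckTopology

/-- The pointwise pseudo-complement of a subpresheaf `A` of `E`. -/
def pointwiseNeg {C : Type u} [Category.{v} C] {E : Cᵒᵖ ⥤ Type w}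
    (A : Subfunctor E) : Subfunctor E where
  obj c := {x | ∀ (d : Cᵒᵖ) (f : c ⟶ d), E.map f x ∉ A.obj d}
  map := by
    intro c d f x hx e g hmem
    rw [← FunctorToTypes.map_comp_apply] at hmem
    exact hx e (f ≫ g) hmem

/-- A presheaf topos `Psh(C)` is De Morgan (for every presheaf `E` and every
subpresheaf `A`, `¬A ⊔ ¬¬A = ⊤` in `Sub(E)`) iff `C` satisfies the right Ore
condition: every cospan can be completed to a commutative square. -/
theorem stmt_18 (C : Type u) [SmallCategory C] :
    (∀ (E : Cᵒᵖ ⥤ Type u) (A : Subfunctor E) (c : Cᵒᵖ) (x : E.obj c),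
        x ∈ (pointwiseNeg A).obj c ∨ x ∈ (pointwiseNeg (pointwiseNeg A)).obj c) ↔
      ∀ (a b c : C) (f : a ⟶ c) (g : b ⟶ c),
        ∃ (d : C) (h : d ⟶ a) (k : d ⟶ b), h ≫ f = k ≫ g := by
  constructor
  · intro hDM a b c f g
    let A : Subfunctor (yoneda.obj c) :=
      { obj := fun d => {m | ∃ h : d.unop ⟶ a, m = h ≫ f}
        map := by
          rintro d e u m ⟨h, rfl⟩
          exact ⟨u.unop ≫ h, by simp⟩ }
    rcases hDM (yoneda.obj c) A (Opposite.op c) (𝟙 c) with h1 | h2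
    · refine absurd ?_ (h1 (Opposite.op a) f.op)
      show ∃ h : a ⟶ a, (yoneda.obj c).map f.op (𝟙 c) = h ≫ f
      exact ⟨𝟙 a, by simp⟩
    · have h3 := h2 (Opposite.op b) g.op
      simp only [pointwiseNeg, A, Set.mem_setOf_eq, not_forall, not_not] at h3
      obtain ⟨d, k, h, hh⟩ := h3
      refine ⟨d.unop, h, k.unop, ?_⟩
      simpa using hh.symm
  · intro hOre E A c x
    by_cases hx : x ∈ (pointwiseNeg A).obj c
    · exact Or.inl hx
    · right
      simp only [pointwiseNeg, Set.mem_setOf_eq, not_forall, not_not] at hx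
      obtain ⟨d, f, hf⟩ := hx
      intro e g hg
      obtain ⟨w, h, k, hsq⟩ := hOre d.unop e.unop c.unop f.unop g.unop
      have heq : f ≫ h.op = g ≫ k.op := Quiver.Hom.unop_inj (by simpa using hsq)
      have hmem : E.map k.op (E.map g x) ∈ A.obj (Opposite.op w) := by
        rw [← FunctorToTypes.map_comp_apply, ← heq, FunctorToTypes.map_comp_apply]
        exact A.map h.op hf
      exact hg (Opposite.op w) k.op hmem
end
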